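/- arXiv:1507.01637 — 7 statements merged into one kernel-verified Lean document; each statement's English description precedes it below -/
import Mathlib

section
/- Let J be a finite index set, let d ≥ 1, let r = (r_j)_{j∈J} be nonnegative radii, and let τ be a binary hierarchy over J. Then the stratum S(τ) has nonempty interior in (ℝᵈ)^J; that is, there exists a nonempty open subset of (ℝᵈ)^J contained in S(τ). -/
open Finset

/-- A binary hierarchy over a finite index set `J`, encoded by its cluster set:
a laminar family of nonempty subsets of `J` containing the root `J` and all
singletons, in which every nonsingleton member is the disjoint union of exactly
two members (its children). -/
structure BinaryHierarchy (J : Type*) [DecidableEq J] [Fintype J] where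
  clusters : Finset (Finset J)
  root_mem : (Finset.univ : Finset J) ∈ clusters
  singleton_mem : ∀ j : J, ({j} : Finset J) ∈ clusters
  nonempty_of_mem : ∀ I ∈ clusters, I.Nonempty
  laminar : ∀ I ∈ clusters, ∀ K ∈ clusters, I ⊆ K ∨ K ⊆ I ∨ Disjoint I K
  binary_split : ∀ I ∈ clusters, 1 < I.card →
    ∃ L ∈ clusters, ∃ R ∈ clusters, Disjoint L R ∧ L ∪ R = I

variable {J : Type*} [DecidableEq J] [Fintype J]

/-- The parent of a cluster `I`: the smallest member of the (laminar) family strictly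
containing `I`, realized as the intersection of all members strictly containing `I`
(these form a chain in a laminar family). -/
def BinaryHierarchy.parent (τ : BinaryHierarchy J) (I : Finset J) : Finset J :=
  (τ.clusters.filter fun K => I ⊂ K).inf id

/-- The sibling (local complement) of a cluster `I`. -/
def BinaryHierarchy.sibling (τ : BinaryHierarchy J) (I : Finset J) : Finset J :=
  τ.parent I \ I

open scoped RealInnerProductSpace

/-- Centroid of the partial configuration `x|A`. -/
noncomputable def centroid {E : Type*} [NormedAddCommGroup E] [NormedSpace ℝ E]
    (x : J → E) (A : Finset J) : E :=
  (A.card : ℝ)⁻¹ • ∑ a ∈ A, x a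

/-- The configuration space of labelled, noncolliding disks with radii `r` in `ℝ^d`. -/
def Conf (d : ℕ) (J : Type*) (r : J → ℝ) : Set (J → EuclideanSpace ℝ (Fin d)) :=
  {x | ∀ i j : J, i ≠ j → r i + r j < ‖x i - x j‖}

/-- `s_I(x)`: difference of the centroids of the cluster `I` and its sibling. -/
noncomputable def sepVec (τ : BinaryHierarchy J) {d : ℕ}
    (x : J → EuclideanSpace ℝ (Fin d)) (I : Finset J) : EuclideanSpace ℝ (Fin d) :=
  centroid x I - centroid x (τ.sibling I)

/-- `m_I(x)`: midpoint of the centroids of the cluster `I` and its sibling. -/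
noncomputable def midpt (τ : BinaryHierarchy J) {d : ℕ}
    (x : J → EuclideanSpace ℝ (Fin d)) (I : Finset J) : EuclideanSpace ℝ (Fin d) :=
  (2 : ℝ)⁻¹ • (centroid x I + centroid x (τ.sibling I))

/-- `σ_{i,I,τ}(x)`: signed distance of agent `i` to the separating hyperplane of `I`
and its sibling. -/
noncomputable def separation (τ : BinaryHierarchy J) {d : ℕ}
    (x : J → EuclideanSpace ℝ (Fin d)) (I : Finset J) (i : J) : ℝ :=
  ⟪x i - midpt τ x I, ‖sepVec τ x I‖⁻¹ • sepVec τ x I⟫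

/-- The stratum of configurations supporting the binary hierarchy `τ`. -/
def stratum (d : ℕ) (r : J → ℝ) (τ : BinaryHierarchy J) :
    Set (J → EuclideanSpace ℝ (Fin d)) :=
  {x | x ∈ Conf d J r ∧ ∀ I ∈ τ.clusters, I ≠ Finset.univ →
      sepVec τ x I ≠ 0 ∧ ∀ i ∈ I, 0 ≤ separation τ x I i}

/-! Place the agents on a line, recursively along the hierarchy: the two children of a cluster
are squeezed affinely into the outer fifths of the cluster's interval. Then every agent of a
cluster lies strictly on its own side of the midpoint of the two centroids, and stretching the
line by a large factor removes all collisions. The configuration so obtained satisfies every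
defining inequality of the stratum strictly, and strict inequalities persist on a neighbourhood. -/

open scoped BigOperators

namespace BinaryHierarchy

structure IsSplit (τ : BinaryHierarchy J) (S L R : Finset J) : Prop where
  mem : S ∈ τ.clusters
  left_mem : L ∈ τ.clusters
  right_mem : R ∈ τ.clusters
  disjoint : Disjoint L R
  union_eq : L ∪ R = S

variable {τ : BinaryHierarchy J}

lemma exists_isSplit {S : Finset J} (hS : S ∈ τ.clusters) (hcard : 1 < #S) :
    ∃ L R, τ.IsSplit S L R := by
  obtain ⟨L, hL, R, hR, hdisj, hunion⟩ := τ.binary_split S hS hcard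
  exact ⟨L, R, hS, hL, hR, hdisj, hunion⟩

lemma sibling_subset_of_ssubset {I L : Finset J} (hL : L ∈ τ.clusters) (hIL : I ⊂ L) :
    τ.sibling I ⊆ L :=
  sdiff_subset.trans (inf_le (mem_filter.2 ⟨hL, hIL⟩))

namespace IsSplit

variable {S L R : Finset J} (h : τ.IsSplit S L R)
include h

lemma symm : τ.IsSplit S R L :=
  ⟨h.mem, h.right_mem, h.left_mem, h.disjoint.symm, union_comm L R ▸ h.union_eq⟩

lemma left_ssubset : L ⊂ S :=
  h.union_eq ▸ left_lt_sup.2 fun hRL =>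
    (τ.nonempty_of_mem R h.right_mem).ne_empty (h.disjoint.symm.eq_bot_of_le hRL)

lemma subset_of_left_ssubset {K : Finset J} (hK : K ∈ τ.clusters) (hLK : L ⊂ K) : S ⊆ K := by
  obtain ⟨y, hy⟩ := τ.nonempty_of_mem L h.left_mem
  rcases τ.laminar K hK S h.mem with hKS | hSK | hdisj
  · rcases τ.laminar K hK R h.right_mem with hKR | hRK | hdisjR
    · exact absurd (hKR (hLK.1 hy)) (disjoint_left.1 h.disjoint hy)
    · exact h.union_eq ▸ union_subset hLK.1 hRK
    · have hKL : K ⊆ L := hdisjR.left_le_of_le_sup_right (h.union_eq ▸ hKS : K ⊆ L ∪ R)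
      exact absurd hKL hLK.not_subset
  · exact hSK
  · exact absurd (h.left_ssubset.1 hy) (disjoint_left.1 hdisj (hLK.1 hy))

lemma parent_left : τ.parent L = S :=
  le_antisymm (inf_le (mem_filter.2 ⟨h.mem, h.left_ssubset⟩))
    (Finset.le_inf fun _ hK =>
      h.subset_of_left_ssubset (mem_filter.1 hK).1 (mem_filter.1 hK).2)

lemma sibling_left : τ.sibling L = R := by
  rw [sibling, h.parent_left, ← h.union_eq, union_sdiff_cancel_left h.disjoint]

lemma subset_or_subset_of_ssubset {I : Finset J} (hI : I ∈ τ.clusters) (hIS : I ⊂ S) :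
    I ⊆ L ∨ I ⊆ R := by
  rcases τ.laminar I hI L h.left_mem with hIL | hLI | hdisj
  · exact .inl hIL
  · rcases hLI.eq_or_ssubset with rfl | hLI
    · exact .inl subset_rfl
    · exact absurd (h.subset_of_left_ssubset hI hLI) hIS.not_subset
  · exact .inr (hdisj.left_le_of_le_sup_left (h.union_eq ▸ hIS.subset : I ⊆ L ∪ R))

end IsSplit

end BinaryHierarchy

section LineConfiguration

variable {ι : Type*}

/-- Agents placed at the reals `f`: `σ_{i,I} · ‖s_I‖ > 0` for every `i ∈ I`, with `K` in the
role of the sibling. -/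
def Separates (f : ι → ℝ) (I K : Finset ι) : Prop :=
  K.Nonempty ∧
    ∀ i ∈ I,
      0 < (f i - (𝔼 j ∈ I, f j + 𝔼 j ∈ K, f j) / 2) * (𝔼 j ∈ I, f j - 𝔼 j ∈ K, f j)

lemma expect_eq_mul_add {A : Finset ι} (hA : A.Nonempty) {f g : ι → ℝ} {α β : ℝ}
    (hfg : ∀ j ∈ A, f j = α * g j + β) : 𝔼 j ∈ A, f j = α * 𝔼 j ∈ A, g j + β := by
  rw [expect_congr rfl hfg, expect_add_distrib, ← mul_expect, expect_const hA]

lemma Separates.of_affine [DecidableEq ι] {f g : ι → ℝ} {I K : Finset ι}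
    (hg : Separates g I K) (hI : I.Nonempty) {α β : ℝ} (hα : 0 < α)
    (hfg : ∀ j ∈ I ∪ K, f j = α * g j + β) :
    Separates f I K := by
  refine ⟨hg.1, fun i hi => ?_⟩
  rw [hfg i (mem_union_left _ hi),
    expect_eq_mul_add hI fun j hj => hfg j (mem_union_left _ hj),
    expect_eq_mul_add hg.1 fun j hj => hfg j (mem_union_right _ hj)]
  exact (mul_pos (pow_pos hα 2) (hg.2 i hi)).trans_eq (by ring)

lemma separates_of_forall_mem_Icc {f : ι → ℝ} {I K : Finset ι} (hI : I.Nonempty)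
    (hK : K.Nonempty) {p q u v : ℝ} (hfI : ∀ i ∈ I, f i ∈ Set.Icc p q)
    (hfK : ∀ k ∈ K, f k ∈ Set.Icc u v) (hgapI : 2 * q < p + u) (hgapK : q + v < 2 * u) :
    Separates f I K ∧ Separates f K I := by
  have hpI : p ≤ 𝔼 j ∈ I, f j := le_expect hI fun i hi => (hfI i hi).1
  have hIq : 𝔼 j ∈ I, f j ≤ q := expect_le hI fun i hi => (hfI i hi).2
  have huK : u ≤ 𝔼 j ∈ K, f j := le_expect hK fun k hk => (hfK k hk).1
  have hKv : 𝔼 j ∈ K, f j ≤ v := expect_le hK fun k hk => (hfK k hk).2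
  refine ⟨⟨hK, fun i hi => mul_pos_of_neg_of_neg ?_ ?_⟩, ⟨hI, fun k hk => mul_pos ?_ ?_⟩⟩
  · linarith [(hfI i hi).2]
  · linarith [(hfI i hi).1]
  · linarith [(hfK k hk).1]
  · linarith [(hfK k hk).1]

end LineConfiguration

namespace BinaryHierarchy

variable {τ : BinaryHierarchy J}

lemma separates_of_affine_of_ssubset {L : Finset J} (hL : L ∈ τ.clusters) {f g : J → ℝ}
    (hg : ∀ I ∈ τ.clusters, I ⊂ L → Separates g I (τ.sibling I)) {α β : ℝ} (hα : 0 < α)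
    (hfg : ∀ j ∈ L, f j = α * g j + β) :
    ∀ I ∈ τ.clusters, I ⊂ L → Separates f I (τ.sibling I) := fun I hI hIL =>
  (hg I hI hIL).of_affine (τ.nonempty_of_mem I hI) hα fun j hj =>
    hfg j (union_subset hIL.subset (sibling_subset_of_ssubset hL hIL) hj)

variable (τ) in
lemma exists_separating_line_config {S : Finset J} (hS : S ∈ τ.clusters) :
    ∃ f : J → ℝ, (∀ j ∈ S, f j ∈ Set.Icc 0 1) ∧ Set.InjOn f S ∧
      ∀ I ∈ τ.clusters, I ⊂ S → Separates f I (τ.sibling I) := by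
  induction S using Finset.strongInduction with
  | H S ih =>
  by_cases hcard : 1 < #S
  swap
  · refine ⟨0, fun _ _ => ⟨le_rfl, zero_le_one⟩, ?_, fun I hI hIS => ?_⟩
    · exact fun a ha b hb _ => card_le_one.1 (not_lt.1 hcard) a ha b hb
    · have := card_lt_card hIS
      have := (τ.nonempty_of_mem I hI).card_pos
      omega
  obtain ⟨L, R, h⟩ := exists_isSplit hS hcard
  obtain ⟨f₁, hf₁, hinj₁, hsep₁⟩ := ih L h.left_ssubset h.left_mem
  obtain ⟨f₂, hf₂, hinj₂, hsep₂⟩ := ih R h.symm.left_ssubset h.right_mem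
  set f : J → ℝ := fun j => if j ∈ L then f₁ j / 5 else (f₂ j + 4) / 5
  have hfL : ∀ j ∈ L, f j = 5⁻¹ * f₁ j + 0 := fun j hj => (if_pos hj).trans (by ring)
  have hfR : ∀ j ∈ R, f j = 5⁻¹ * f₂ j + 4 / 5 := fun j hj =>
    (if_neg (disjoint_right.1 h.disjoint hj)).trans (by ring)
  have hIccL : ∀ j ∈ L, f j ∈ Set.Icc 0 (1 / 5) := fun j hj => by
    rw [hfL j hj]; constructor <;> linarith [(hf₁ j hj).1, (hf₁ j hj).2]
  have hIccR : ∀ j ∈ R, f j ∈ Set.Icc (4 / 5) 1 := fun j hj => by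
    rw [hfR j hj]; constructor <;> linarith [(hf₂ j hj).1, (hf₂ j hj).2]
  have hLR := separates_of_forall_mem_Icc (τ.nonempty_of_mem L h.left_mem)
    (τ.nonempty_of_mem R h.right_mem) hIccL hIccR (by norm_num) (by norm_num)
  refine ⟨f, fun j hj => ?_, ?_, fun I hI hIS => ?_⟩
  · rcases mem_union.1 (h.union_eq ▸ hj : j ∈ L ∪ R) with hj | hj
    · exact ⟨(hIccL j hj).1, by linarith [(hIccL j hj).2]⟩
    · exact ⟨by linarith [(hIccR j hj).1], (hIccR j hj).2⟩
  · rw [← h.union_eq, coe_union, Set.injOn_union (disjoint_coe.2 h.disjoint)]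
    refine ⟨fun a ha b hb hab => hinj₁ ha hb ?_, fun a ha b hb hab => hinj₂ ha hb ?_,
      fun a ha b hb hab => ?_⟩
    · rw [hfL a ha, hfL b hb] at hab; linarith
    · rw [hfR a ha, hfR b hb] at hab; linarith
    · linarith [(hIccL a ha).2, (hIccR b hb).1]
  rcases h.subset_or_subset_of_ssubset hI hIS with hIL | hIR
  · rcases hIL.eq_or_ssubset with rfl | hIL
    · exact h.sibling_left ▸ hLR.1
    · exact separates_of_affine_of_ssubset h.left_mem hsep₁ (by norm_num) hfL I hI hIL
  · rcases hIR.eq_or_ssubset with rfl | hIR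
    · exact h.symm.sibling_left ▸ hLR.2
    · exact separates_of_affine_of_ssubset h.right_mem hsep₂ (by norm_num) hfR I hI hIR

end BinaryHierarchy

section Geometry

variable {d : ℕ}

def strictStratum (d : ℕ) (r : J → ℝ) (τ : BinaryHierarchy J) :
    Set (J → EuclideanSpace ℝ (Fin d)) :=
  {x | x ∈ Conf d J r ∧ ∀ I ∈ τ.clusters, I ≠ Finset.univ →
      sepVec τ x I ≠ 0 ∧ ∀ i ∈ I, 0 < ⟪x i - midpt τ x I, sepVec τ x I⟫}

lemma strictStratum_subset_stratum (r : J → ℝ) (τ : BinaryHierarchy J) :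
    strictStratum d r τ ⊆ stratum d r τ := fun _ ⟨hconf, hx⟩ =>
  ⟨hconf, fun I hI hIu => ⟨(hx I hI hIu).1, fun i hi => by
    rw [separation, real_inner_smul_right]
    exact mul_nonneg (inv_nonneg.2 (norm_nonneg _)) ((hx I hI hIu).2 i hi).le⟩⟩

@[fun_prop]
lemma continuous_centroid {ι E : Type*} [NormedAddCommGroup E] [NormedSpace ℝ E]
    (A : Finset ι) : Continuous fun x : ι → E => centroid x A := by
  unfold _root_.centroid
  fun_prop

lemma isOpen_conf {ι : Type*} [Finite ι] (r : ι → ℝ) : IsOpen (Conf d ι r) := by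
  simp only [Conf, Set.ofPred_forall]
  exact isOpen_iInter_of_finite fun i => isOpen_iInter_of_finite fun j =>
    isOpen_iInter_of_finite fun _ => isOpen_lt continuous_const (by fun_prop)

lemma isOpen_strictStratum (r : J → ℝ) (τ : BinaryHierarchy J) :
    IsOpen (strictStratum d r τ) := by
  simp only [strictStratum, Set.ofPred_and, Set.ofPred_forall, sepVec, midpt]
  exact (isOpen_conf r).inter <| isOpen_iInter_of_finite fun I => isOpen_iInter_of_finite
    fun _ => isOpen_iInter_of_finite fun _ =>
      (isOpen_ne_fun (by fun_prop) continuous_const).inter <| isOpen_iInter_of_finite fun i =>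
        isOpen_iInter_of_finite fun _ => isOpen_lt continuous_const (by fun_prop)

lemma centroid_smul_const {ι E : Type*} [NormedAddCommGroup E] [NormedSpace ℝ E]
    (c : ι → ℝ) (e : E) (A : Finset ι) :
    centroid (fun j => c j • e) A = (𝔼 j ∈ A, c j) • e := by
  rw [_root_.centroid, expect_eq_sum_div_card, ← sum_smul, smul_smul, div_eq_inv_mul]

lemma smul_const_mem_strictStratum {r : J → ℝ} {τ : BinaryHierarchy J} {f : J → ℝ}
    {e : EuclideanSpace ℝ (Fin d)} (he : ‖e‖ = 1)
    (hconf : ∀ i j, i ≠ j → r i + r j < |f i - f j|)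
    (hsep : ∀ I ∈ τ.clusters, I ≠ univ → Separates f I (τ.sibling I)) :
    (fun j => f j • e) ∈ strictStratum d r τ := by
  have hsepVec : ∀ I, sepVec τ (fun j => f j • e) I =
      (𝔼 j ∈ I, f j - 𝔼 j ∈ τ.sibling I, f j) • e := fun I => by
    rw [sepVec, centroid_smul_const, centroid_smul_const, sub_smul]
  refine ⟨fun i j hij => ?_, fun I hI hIu => ⟨?_, fun i hi => ?_⟩⟩
  · rw [← sub_smul, norm_smul, he, mul_one]
    exact hconf i j hij
  · obtain ⟨i, hi⟩ := τ.nonempty_of_mem I hI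
    rw [hsepVec]
    exact smul_ne_zero (right_ne_zero_of_mul ((hsep I hI hIu).2 i hi).ne')
      (norm_ne_zero_iff.1 (he ▸ one_ne_zero))
  · rw [hsepVec, midpt, centroid_smul_const, centroid_smul_const, ← add_smul, smul_smul,
      ← sub_smul, real_inner_smul_left, real_inner_smul_right, real_inner_self_eq_norm_sq, he]
    exact ((hsep I hI hIu).2 i hi).trans_eq (by ring)

lemma exists_pos_lt_abs_mul_sub {ι : Type*} [Finite ι] {f : ι → ℝ}
    (hf : Function.Injective f) (r : ι → ℝ) :
    ∃ M > 0, ∀ i j, i ≠ j → r i + r j < |M * f i - M * f j| := by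
  obtain ⟨B, hB⟩ := Finite.bddAbove_range fun p : ι × ι => (r p.1 + r p.2) / |f p.1 - f p.2|
  refine ⟨max B 0 + 1, by positivity, fun i j hij => ?_⟩
  have hpos : 0 < |f i - f j| := abs_pos.2 (sub_ne_zero.2 (hf.ne hij))
  have hle : (r i + r j) / |f i - f j| ≤ B := hB ⟨(i, j), rfl⟩
  rw [← mul_sub, abs_mul, abs_of_pos (by positivity), ← div_lt_iff₀ hpos]
  linarith [le_max_left B 0]

end Geometry

theorem stratum_interior_nonempty_general (d : ℕ) (hd : 1 ≤ d) (r : J → ℝ)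
    (τ : BinaryHierarchy J) :
    ∃ U : Set (J → EuclideanSpace ℝ (Fin d)), IsOpen U ∧ U.Nonempty ∧
      U ⊆ stratum d r τ := by
  obtain ⟨f, -, hinj, hsep⟩ := τ.exists_separating_line_config τ.root_mem
  obtain ⟨M, hM, hconf⟩ :=
    exists_pos_lt_abs_mul_sub (Set.injOn_univ.1 (by simpa using hinj)) r
  have hsepM : ∀ I ∈ τ.clusters, I ⊂ univ → Separates (fun j => M * f j) I (τ.sibling I) :=
    BinaryHierarchy.separates_of_affine_of_ssubset τ.root_mem hsep hM (β := 0)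
      fun j _ => (add_zero _).symm
  obtain ⟨e, he⟩ : ∃ e : EuclideanSpace ℝ (Fin d), ‖e‖ = 1 := ⟨.single ⟨0, hd⟩ 1, by simp⟩
  refine ⟨strictStratum d r τ, isOpen_strictStratum r τ, ⟨fun j => (M * f j) • e, ?_⟩,
    strictStratum_subset_stratum r τ⟩
  exact smul_const_mem_strictStratum he hconf fun I hI hIu =>
    hsepM I hI (ssubset_univ_iff.2 hIu)

/-- the stratum has nonempty interior in `(ℝ^d)^J`. -/
theorem stratum_interior_nonempty (d : ℕ) (hd : 1 ≤ d) (r : J → ℝ) (hr : ∀ j, 0 ≤ r j)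
    (τ : BinaryHierarchy J) :
    ∃ U : Set (J → EuclideanSpace ℝ (Fin d)), IsOpen U ∧ U.Nonempty ∧
      U ⊆ stratum d r τ :=
  stratum_interior_nonempty_general d hd r τ
end

section
/- Let τ₁ and τ₂ be distinct NNI-adjacent binary hierarchies over a finite index set J. Then there exist pairwise disjoint clusters A, B, C ∈ C(τ₁) ∩ C(τ₂) such that C(τ₁) \ C(τ₂) = {A ∪ B} and C(τ₂) \ C(τ₁) = {B ∪ C}; moreover, the ordered triple (A, B, C) with these properties is unique. -/
open Finset

variable {J : Type*} [DecidableEq J] [Fintype J]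

/-- A nearest neighbor interchange move from `τ` to `τ'`: there is a cluster `A ∈ C(τ)`
whose parent `P = Pr(A,τ)` is not the root, with `B := P \ A` and `C := Pr(P,τ) \ P`,
such that `C(τ') = (C(τ) \ {A ∪ B}) ∪ {B ∪ C}`. -/
def NNIMove (τ τ' : BinaryHierarchy J) : Prop :=
  ∃ A ∈ τ.clusters, τ.parent A ≠ Finset.univ ∧
    τ'.clusters =
      (τ.clusters \ {A ∪ (τ.parent A \ A)}) ∪
        {(τ.parent A \ A) ∪ (τ.parent (τ.parent A) \ τ.parent A)}

/-- Two binary hierarchies are NNI-adjacent if one is obtained from the other by a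
single nearest neighbor interchange. -/
def NNIAdjacent (τ τ' : BinaryHierarchy J) : Prop := NNIMove τ τ' ∨ NNIMove τ' τ

/-! An NNI move at `A`, with parent `P = A ∪ B` and grandparent `P ∪ C`, deletes only the
cluster `P` and creates only `B ∪ C`, which cannot already be a cluster since it overlaps `P`
without being nested with it. Uniqueness is set algebra: for pairwise disjoint `A`, `B`, `C`
the middle set is recovered as `B = (A ∪ B) ∩ (B ∪ C)`, and then `A` and `C` as differences. -/

namespace BinaryHierarchy

variable (τ : BinaryHierarchy J)

lemma not_disjoint_self {K : Finset J} (hK : K ∈ τ.clusters) : ¬Disjoint K K :=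
  fun h => (τ.nonempty_of_mem K hK).ne_empty h.eq_bot_of_self

lemma subset_or_subset_of_not_disjoint {I K : Finset J} (hI : I ∈ τ.clusters)
    (hK : K ∈ τ.clusters) (h : ¬Disjoint I K) : I ⊆ K ∨ K ⊆ I := by
  rcases τ.laminar I hI K hK with h' | h' | h'
  exacts [Or.inl h', Or.inr h', absurd h' h]

/-- Since `A` is nonempty, the clusters strictly containing it form a chain, so their
intersection is the least of them. -/
lemma isLeast_parent {A : Finset J} (hA : A ∈ τ.clusters) (hA_ne : A ≠ univ) :
    IsLeast {K | K ∈ τ.clusters ∧ A ⊂ K} (τ.parent A) := by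
  set S := τ.clusters.filter fun K => A ⊂ K
  have hS : (S : Set (Finset J)) = {K | K ∈ τ.clusters ∧ A ⊂ K} := by ext; simp [S]
  obtain ⟨M, hM, hM_min⟩ :=
    S.exists_minimal ⟨univ, mem_filter.mpr ⟨τ.root_mem, ssubset_univ_iff.mpr hA_ne⟩⟩
  have hM_le : ∀ K ∈ S, M ⊆ K := by
    intro K hK
    obtain ⟨hMc, hAM⟩ := mem_filter.mp hM
    obtain ⟨hKc, hAK⟩ := mem_filter.mp hK
    have hmeet : ¬Disjoint M K := fun h => τ.not_disjoint_self hA (h.mono hAM.subset hAK.subset)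
    rcases τ.subset_or_subset_of_not_disjoint hMc hKc hmeet with hMK | hKM
    exacts [hMK, hM_min hK hKM]
  have hpar : τ.parent A = M := le_antisymm (inf_le hM) (Finset.le_inf hM_le)
  rw [hpar, ← hS]
  exact ⟨hM, hM_le⟩

lemma parent_mem {A : Finset J} (hA : A ∈ τ.clusters) (hA_ne : A ≠ univ) :
    τ.parent A ∈ τ.clusters :=
  (τ.isLeast_parent hA hA_ne).1.1

lemma ssubset_parent {A : Finset J} (hA : A ∈ τ.clusters) (hA_ne : A ≠ univ) :
    A ⊂ τ.parent A :=
  (τ.isLeast_parent hA hA_ne).1.2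

lemma parent_univ : τ.parent univ = univ := by
  have : τ.clusters.filter (fun K => univ ⊂ K) = ∅ :=
    filter_eq_empty_iff.mpr fun K _ h => h.not_subset (subset_univ K)
  simp [parent, this, top_eq_univ]

lemma ne_univ_of_parent_ne_univ {A : Finset J} (h : τ.parent A ≠ univ) : A ≠ univ := by
  rintro rfl
  exact h τ.parent_univ

lemma eq_of_not_disjoint_of_union_eq_parent {A L R : Finset J} (hA : A ∈ τ.clusters)
    (hA_ne : A ≠ univ) (hL : L ∈ τ.clusters) (hR : R ∈ τ.clusters) (hLR : Disjoint L R)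
    (hLR_eq : L ∪ R = τ.parent A) (hAL : ¬Disjoint A L) : A = L := by
  have hAP := τ.ssubset_parent hA hA_ne
  rcases τ.subset_or_subset_of_not_disjoint hA hL hAL with hA_sub | hL_sub
  · refine hA_sub.eq_of_not_ssubset fun hA_lt => τ.not_disjoint_self hR ?_
    have hPL : τ.parent A ⊆ L := (τ.isLeast_parent hA hA_ne).2 ⟨hL, hA_lt⟩
    exact hLR.symm.mono_right (subset_union_right.trans (hLR_eq ▸ hPL))
  · have hAR : Disjoint A R := by
      by_contra hAR
      rcases τ.subset_or_subset_of_not_disjoint hA hR hAR with hA_sub | hR_sub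
      · exact τ.not_disjoint_self hL (hLR.mono_right (hL_sub.trans hA_sub))
      · exact hAP.not_subset (hLR_eq ▸ union_subset hL_sub hR_sub)
    refine subset_antisymm (fun x hx => ?_) hL_sub
    rcases mem_union.mp (hLR_eq ▸ hAP.subset hx) with hxL | hxR
    exacts [hxL, absurd hxR (disjoint_left.mp hAR hx)]

lemma sibling_mem {A : Finset J} (hA : A ∈ τ.clusters) (hA_ne : A ≠ univ) :
    τ.sibling A ∈ τ.clusters := by
  have hAP := τ.ssubset_parent hA hA_ne
  have hcard : 1 < (τ.parent A).card :=
    Nat.lt_of_le_of_lt (card_pos.mpr (τ.nonempty_of_mem A hA)) (card_lt_card hAP)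
  obtain ⟨L, hL, R, hR, hLR, hLR_eq⟩ := τ.binary_split _ (τ.parent_mem hA hA_ne) hcard
  have hA_sub : A ⊆ L ∪ R := hLR_eq ▸ hAP.subset
  by_cases hAL : Disjoint A L
  · have hAR : A = R := τ.eq_of_not_disjoint_of_union_eq_parent hA hA_ne hR hL hLR.symm
      (union_comm L R ▸ hLR_eq) fun hAR => τ.not_disjoint_self hA
        (disjoint_union_right.mpr ⟨hAL, hAR⟩ |>.mono_right hA_sub)
    rwa [sibling, ← hLR_eq, hAR, union_sdiff_cancel_right hLR]
  · rwa [sibling, ← hLR_eq, τ.eq_of_not_disjoint_of_union_eq_parent hA hA_ne hL hR hLR hLR_eq hAL,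
      union_sdiff_cancel_left hLR]

/-- `B ∪ C` would have to be comparable with or disjoint from `P = A ∪ B`, but it meets `P` in
`B` and contains neither `A` nor anything inside `C`. -/
lemma sibling_union_sibling_parent_not_mem {A : Finset J} (hA : A ∈ τ.clusters)
    (hP_ne : τ.parent A ≠ univ) : τ.sibling A ∪ τ.sibling (τ.parent A) ∉ τ.clusters := by
  have hA_ne := τ.ne_univ_of_parent_ne_univ hP_ne
  have hAP := τ.ssubset_parent hA hA_ne
  have hP := τ.parent_mem hA hA_ne
  have hAB : Disjoint A (τ.sibling A) := disjoint_sdiff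
  have hCP : Disjoint (τ.sibling (τ.parent A)) (τ.parent A) := sdiff_disjoint
  intro hBC
  rcases τ.laminar _ hBC _ hP with hBC_sub | hP_sub | hdisj
  · exact τ.not_disjoint_self (τ.sibling_mem hP hP_ne)
      (hCP.mono_right (subset_union_right.trans hBC_sub))
  · exact τ.not_disjoint_self hA
      ((disjoint_union_right.mpr ⟨hAB, (hCP.mono_right hAP.subset).symm⟩).mono_right
        (hAP.subset.trans hP_sub))
  · exact τ.not_disjoint_self (τ.sibling_mem hA hA_ne) (hdisj.mono subset_union_left sdiff_subset)

end BinaryHierarchy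

def IsNNITriplet (τ₁ τ₂ : BinaryHierarchy J) (A B C : Finset J) : Prop :=
  Disjoint A B ∧ Disjoint A C ∧ Disjoint B C ∧
    A ∈ τ₁.clusters ∧ A ∈ τ₂.clusters ∧ B ∈ τ₁.clusters ∧ B ∈ τ₂.clusters ∧
    C ∈ τ₁.clusters ∧ C ∈ τ₂.clusters ∧
    τ₁.clusters \ τ₂.clusters = {A ∪ B} ∧ τ₂.clusters \ τ₁.clusters = {B ∪ C}

lemma IsNNITriplet.symm {τ₁ τ₂ : BinaryHierarchy J} {A B C : Finset J}
    (h : IsNNITriplet τ₁ τ₂ A B C) : IsNNITriplet τ₂ τ₁ C B A := by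
  obtain ⟨hAB, hAC, hBC, hA₁, hA₂, hB₁, hB₂, hC₁, hC₂, h₁₂, h₂₁⟩ := h
  exact ⟨hBC.symm, hAC.symm, hAB.symm, hC₂, hC₁, hB₂, hB₁, hA₂, hA₁,
    by rw [h₂₁, union_comm], by rw [h₁₂, union_comm]⟩

lemma Finset.union_inter_union_eq_of_disjoint {α : Type*} [DecidableEq α] {s t u : Finset α}
    (hsu : Disjoint s u) : (s ∪ t) ∩ (t ∪ u) = t := by
  rw [union_comm s, ← union_inter_distrib_left, disjoint_iff_inter_eq_empty.mp hsu, union_empty]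

lemma IsNNITriplet.eq {τ₁ τ₂ : BinaryHierarchy J} {A B C A' B' C' : Finset J}
    (h : IsNNITriplet τ₁ τ₂ A B C) (h' : IsNNITriplet τ₁ τ₂ A' B' C') :
    (A, B, C) = (A', B', C') := by
  obtain ⟨hAB, hAC, hBC, -, -, -, -, -, -, h₁₂, h₂₁⟩ := h
  obtain ⟨hAB', hAC', hBC', -, -, -, -, -, -, h₁₂', h₂₁'⟩ := h'
  have hAB_eq : A ∪ B = A' ∪ B' := singleton_injective (h₁₂ ▸ h₁₂')
  have hBC_eq : B ∪ C = B' ∪ C' := singleton_injective (h₂₁ ▸ h₂₁')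
  have hB : B = B' := by
    rw [← union_inter_union_eq_of_disjoint (t := B) hAC,
      ← union_inter_union_eq_of_disjoint (t := B') hAC', hAB_eq, hBC_eq]
  have hA : A = A' := by
    rw [← union_sdiff_cancel_right hAB, ← union_sdiff_cancel_right hAB', hAB_eq, hB]
  have hC : C = C' := by
    rw [← union_sdiff_cancel_left hBC, ← union_sdiff_cancel_left hBC', hBC_eq, hB]
  rw [hA, hB, hC]

lemma NNIMove.exists_isNNITriplet {τ τ' : BinaryHierarchy J} (h : NNIMove τ τ') :
    ∃ A B C, IsNNITriplet τ τ' A B C := by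
  obtain ⟨A, hA, hP_ne, hτ'⟩ := h
  have hA_ne := τ.ne_univ_of_parent_ne_univ hP_ne
  have hAP := τ.ssubset_parent hA hA_ne
  have hP := τ.parent_mem hA hA_ne
  have hBC_not := τ.sibling_union_sibling_parent_not_mem hA hP_ne
  set P := τ.parent A
  set B := τ.sibling A
  set C := τ.sibling P
  have hB : B ∈ τ.clusters := τ.sibling_mem hA hA_ne
  have hC : C ∈ τ.clusters := τ.sibling_mem hP hP_ne
  have hAB : Disjoint A B := disjoint_sdiff
  have hCP : Disjoint C P := sdiff_disjoint
  have hAB_eq : A ∪ B = P := union_sdiff_of_subset hAP.subset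
  replace hτ' : τ'.clusters = (τ.clusters \ {A ∪ B}) ∪ {B ∪ C} := hτ'
  rw [hAB_eq] at hτ'
  have mem_of_ne : ∀ K ∈ τ.clusters, K ≠ P → K ∈ τ'.clusters := by
    intro K hK hKP; simp [hτ', hK, hKP]
  have hA_ne_P : A ≠ P := hAP.ne
  have hB_ne_P : B ≠ P := fun h => τ.not_disjoint_self hA (hAB.mono_right (h ▸ hAP.subset))
  have hC_ne_P : C ≠ P := fun h => τ.not_disjoint_self hC (hCP.mono_right h.le)
  refine ⟨A, B, C, hAB, (hCP.mono_right hAP.subset).symm, (hCP.mono_right sdiff_subset).symm,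
    hA, mem_of_ne A hA hA_ne_P, hB, mem_of_ne B hB hB_ne_P, hC, mem_of_ne C hC hC_ne_P, ?_, ?_⟩
  · ext K; simp only [hτ', hAB_eq]; grind
  · ext K; simp only [hτ']; grind

lemma NNIAdjacent.exists_isNNITriplet {τ₁ τ₂ : BinaryHierarchy J} (h : NNIAdjacent τ₁ τ₂) :
    ∃ A B C, IsNNITriplet τ₁ τ₂ A B C := by
  rcases h with h | h
  · exact h.exists_isNNITriplet
  · obtain ⟨A, B, C, hT⟩ := h.exists_isNNITriplet
    exact ⟨C, B, A, hT.symm⟩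

theorem nni_triplet_exists_unique_general (τ₁ τ₂ : BinaryHierarchy J)
    (hadj : NNIAdjacent τ₁ τ₂) :
    ∃! T : Finset J × Finset J × Finset J,
      Disjoint T.1 T.2.1 ∧ Disjoint T.1 T.2.2 ∧ Disjoint T.2.1 T.2.2 ∧
      T.1 ∈ τ₁.clusters ∧ T.1 ∈ τ₂.clusters ∧
      T.2.1 ∈ τ₁.clusters ∧ T.2.1 ∈ τ₂.clusters ∧
      T.2.2 ∈ τ₁.clusters ∧ T.2.2 ∈ τ₂.clusters ∧
      τ₁.clusters \ τ₂.clusters = {T.1 ∪ T.2.1} ∧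
      τ₂.clusters \ τ₁.clusters = {T.2.1 ∪ T.2.2} := by
  obtain ⟨A, B, C, hT⟩ := hadj.exists_isNNITriplet
  exact ⟨(A, B, C), hT, fun T hT' => IsNNITriplet.eq (A := T.1) hT' hT⟩

/-- distinct NNI-adjacent hierarchies determine a unique NNI-triplet
`(A, B, C)` of pairwise disjoint common clusters with
`C(τ₁) \ C(τ₂) = {A ∪ B}` and `C(τ₂) \ C(τ₁) = {B ∪ C}`. -/
theorem nni_triplet_exists_unique (τ₁ τ₂ : BinaryHierarchy J)
    (hne : τ₁.clusters ≠ τ₂.clusters) (hadj : NNIAdjacent τ₁ τ₂) :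
    ∃! T : Finset J × Finset J × Finset J,
      Disjoint T.1 T.2.1 ∧ Disjoint T.1 T.2.2 ∧ Disjoint T.2.1 T.2.2 ∧
      T.1 ∈ τ₁.clusters ∧ T.1 ∈ τ₂.clusters ∧
      T.2.1 ∈ τ₁.clusters ∧ T.2.1 ∈ τ₂.clusters ∧
      T.2.2 ∈ τ₁.clusters ∧ T.2.2 ∈ τ₂.clusters ∧
      τ₁.clusters \ τ₂.clusters = {T.1 ∪ T.2.1} ∧
      τ₂.clusters \ τ₁.clusters = {T.2.1 ∪ T.2.2} :=
  nni_triplet_exists_unique_general τ₁ τ₂ hadj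
end

section
/- Let τ be a binary hierarchy over a finite index set J and let 𝒫 and 𝒫' be two distinct partitions of J, both compatible with τ. Then at least one of the following holds: (i) there exist a block K' ∈ 𝒫' and a partition 𝒦' of K' with |𝒦'| ≥ 2 such that every block of 𝒦' belongs to 𝒫; or (ii) there exist a block K ∈ 𝒫 and a partition 𝒦 of K with |𝒦| ≥ 2 such that every block of 𝒦 belongs to 𝒫'. -/
open Finset

variable {J : Type*} [DecidableEq J] [Fintype J]

/-- `P` is a partition of the finite set `K`: its blocks are nonempty, pairwise
disjoint, and their union is `K`. -/
def IsPartitionOf (P : Finset (Finset J)) (K : Finset J) : Prop :=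
  (∀ B ∈ P, B.Nonempty) ∧
  (∀ B ∈ P, ∀ B' ∈ P, B ≠ B' → Disjoint B B') ∧
  P.sup id = K

lemma aux_refine (τ : BinaryHierarchy J) (P P' : Finset (Finset J))
    (hpart : IsPartitionOf P (Finset.univ : Finset J))
    (hpart' : IsPartitionOf P' (Finset.univ : Finset J))
    (hcompat : ∀ B ∈ P, B ∈ τ.clusters) (hcompat' : ∀ B ∈ P', B ∈ τ.clusters)
    (K : Finset J) (hK' : K ∈ P') (hKP : K ∉ P)
    (hmax : ∀ B ∈ P, B ∉ P' → B.card ≤ K.card) :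
    ∃ Q' : Finset (Finset J),
        IsPartitionOf Q' K ∧ 2 ≤ Q'.card ∧ ∀ B ∈ Q', B ∈ P := by
  obtain ⟨hne, hdisj, hsup⟩ := hpart
  obtain ⟨hne', hdisj', hsup'⟩ := hpart'
  set Q' := P.filter (· ⊆ K) with hQ'
  have hmemQ : ∀ B ∈ Q', B ∈ P ∧ B ⊆ K := by
    intro B hB
    simpa [hQ'] using hB
  -- every element of K lies in a block of P contained in K
  have hcover : ∀ j ∈ K, ∃ B ∈ Q', j ∈ B := by
    intro j hj
    have : j ∈ P.sup id := by rw [hsup]; exact mem_univ j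
    obtain ⟨B, hB, hjB⟩ := mem_sup.mp this
    refine ⟨B, ?_, hjB⟩
    have hsub : B ⊆ K := by
      rcases τ.laminar B (hcompat B hB) K (hcompat' K hK') with h | h | h
      · exact h
      · -- K ⊆ B
        by_cases hBK : B = K
        · exact hBK.le
        · exfalso
          have hBnP' : B ∉ P' := by
            intro hBP'
            simpa using (hdisj' B hBP' K hK' hBK).le_bot (Finset.mem_inter.mpr ⟨hjB, hj⟩)
          have h1 : B.card ≤ K.card := hmax B hB hBnP'
          have h2 : K.card < B.card :=
            card_lt_card (lt_of_le_of_ne h (fun e => hBK e.symm))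
          omega
      · exact absurd (h.le_bot (Finset.mem_inter.mpr ⟨hjB, hj⟩)) (by simp)
    simp [hQ', hB, hsub]
  have hpartQ : IsPartitionOf Q' K := by
    refine ⟨fun B hB => hne B (hmemQ B hB).1,
      fun B hB B' hB' h => hdisj B (hmemQ B hB).1 B' (hmemQ B' hB').1 h, ?_⟩
    apply le_antisymm
    · exact Finset.sup_le fun B hB => (hmemQ B hB).2
    · intro j hj
      obtain ⟨B, hB, hjB⟩ := hcover j hj
      exact mem_sup.mpr ⟨B, hB, hjB⟩
  refine ⟨Q', hpartQ, ?_, fun B hB => (hmemQ B hB).1⟩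
  -- at least two blocks
  obtain ⟨j, hj⟩ := τ.nonempty_of_mem K (hcompat' K hK')
  obtain ⟨B, hB, hjB⟩ := hcover j hj
  have hBK : B ≠ K := fun e => hKP (e ▸ (hmemQ B hB).1)
  have hBssub : B ⊂ K := lt_of_le_of_ne (hmemQ B hB).2 hBK
  obtain ⟨x, hxK, hxB⟩ := exists_of_ssubset hBssub
  obtain ⟨B₂, hB₂, hxB₂⟩ := hcover x hxK
  have : B ≠ B₂ := fun e => hxB (e ▸ hxB₂)
  exact Finset.one_lt_card.mpr ⟨B, hB, B₂, hB₂, this⟩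

/-- of two distinct compatible partitions of `J`, one partially refines
the other: some block of one admits a nontrivial subpartition by blocks of the other. -/
theorem compatible_partitions_partially_refine (τ : BinaryHierarchy J)
    (P P' : Finset (Finset J))
    (hpart : IsPartitionOf P (Finset.univ : Finset J))
    (hpart' : IsPartitionOf P' (Finset.univ : Finset J))
    (hcompat : ∀ B ∈ P, B ∈ τ.clusters) (hcompat' : ∀ B ∈ P', B ∈ τ.clusters)
    (hne : P ≠ P') :
    (∃ K' ∈ P', ∃ Q' : Finset (Finset J),
        IsPartitionOf Q' K' ∧ 2 ≤ Q'.card ∧ ∀ B ∈ Q', B ∈ P) ∨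
    (∃ K ∈ P, ∃ Q : Finset (Finset J),
        IsPartitionOf Q K ∧ 2 ≤ Q.card ∧ ∀ B ∈ Q, B ∈ P') := by

  -- symmetric difference nonempty
  have : ∃ K, (K ∈ P ∧ K ∉ P') ∨ (K ∈ P' ∧ K ∉ P) := by
    by_contra h
    push_neg at h
    apply hne
    ext B
    constructor
    · intro hB
      by_contra hB'
      exact hB' ((h B).1 hB)
    · intro hB
      by_contra hB'
      exact hB' ((h B).2 hB)
  set S := (P \ P') ∪ (P' \ P) with hS
  have hSne : S.Nonempty := by
    obtain ⟨K, hK⟩ := this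
    rcases hK with ⟨h1, h2⟩ | ⟨h1, h2⟩
    · exact ⟨K, by simp [hS, h1, h2]⟩
    · exact ⟨K, by simp [hS, h1, h2]⟩
  obtain ⟨K, hKS, hKmax⟩ := S.exists_max_image Finset.card hSne
  rcases Finset.mem_union.mp hKS with hK | hK
  · -- K ∈ P \ P' : case (ii)
    obtain ⟨hKP, hKP'⟩ := Finset.mem_sdiff.mp hK
    right
    refine ⟨K, hKP, ?_⟩
    exact aux_refine τ P' P hpart' hpart hcompat' hcompat K hKP hKP'
      (fun B hB hB' => hKmax B (Finset.mem_union_right _ (Finset.mem_sdiff.mpr ⟨hB, hB'⟩)))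
  · -- K ∈ P' \ P : case (i)
    obtain ⟨hKP', hKP⟩ := Finset.mem_sdiff.mp hK
    left
    refine ⟨K, hKP', ?_⟩
    exact aux_refine τ P P' hpart hpart' hcompat hcompat' K hKP' hKP
      (fun B hB hB' => hKmax B (Finset.mem_union_left _ (Finset.mem_sdiff.mpr ⟨hB, hB'⟩)))
end

section
/- Let τ be a binary hierarchy over a finite index set J with |J| ≥ 2, and let {J_L, J_R} be the two children of the root cluster J. For a nonempty cluster K ∈ C(τ), the restriction C(τ)|K := {I ∈ C(τ) : I ⊆ K} is the cluster set of a binary hierarchy over K. Then the number of partitions of J compatible with τ equals 1 + N_L · N_R, where N_L is the number of partitions of J_L compatible with the restricted hierarchy on J_L and N_R is the number of partitions of J_R compatible with the restricted hierarchy on J_R. -/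
open Finset

variable {J : Type*} [DecidableEq J] [Fintype J]

/-- recursive count of compatible partitions. If `JL` and `JR` are the
two children of the root cluster, the number of partitions of `J` compatible with `τ`
is `1 + N_L · N_R`, where `N_L` (resp. `N_R`) counts partitions of `JL` (resp. `JR`)
whose blocks lie in the restricted hierarchy `C(τ)|JL` (resp. `C(τ)|JR`). -/
theorem compatible_partition_count_recursion (τ : BinaryHierarchy J)
    (hJ : 2 ≤ Fintype.card J) (JL JR : Finset J)
    (hL : JL ∈ τ.clusters) (hR : JR ∈ τ.clusters)
    (hdisj : Disjoint JL JR) (hunion : JL ∪ JR = Finset.univ) :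
    Nat.card {P : Finset (Finset J) //
        IsPartitionOf P (Finset.univ : Finset J) ∧ ∀ B ∈ P, B ∈ τ.clusters} =
      1 + Nat.card {P : Finset (Finset J) //
            IsPartitionOf P JL ∧ ∀ B ∈ P, B ∈ τ.clusters.filter (· ⊆ JL)} *
          Nat.card {P : Finset (Finset J) //
            IsPartitionOf P JR ∧ ∀ B ∈ P, B ∈ τ.clusters.filter (· ⊆ JR)} := by
  classical
  have hJLne : JL.Nonempty := τ.nonempty_of_mem JL hL
  have hJRne : JR.Nonempty := τ.nonempty_of_mem JR hR
  have hLneu : JL ≠ Finset.univ := by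
    intro h
    obtain ⟨x, hx⟩ := hJRne
    exact (Finset.disjoint_left.mp hdisj (h ▸ Finset.mem_univ x)) hx
  have hRneu : JR ≠ Finset.univ := by
    intro h
    obtain ⟨x, hx⟩ := hJLne
    exact (Finset.disjoint_right.mp hdisj (h ▸ Finset.mem_univ x)) hx
  -- every element is in JL or JR
  have hcover : ∀ x : J, x ∈ JL ∨ x ∈ JR := by
    intro x
    have : x ∈ JL ∪ JR := hunion ▸ Finset.mem_univ x
    exact Finset.mem_union.mp this
  -- a cluster not equal to univ is contained in JL or JR
  have hside : ∀ B ∈ τ.clusters, B ≠ Finset.univ → B ⊆ JL ∨ B ⊆ JR := by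
    intro B hB hBne
    have hBsubR_of_disjL : Disjoint B JL → B ⊆ JR := by
      intro hd x hx
      rcases hcover x with h | h
      · exact absurd h (Finset.disjoint_left.mp hd hx)
      · exact h
    have hBsubL_of_disjR : Disjoint B JR → B ⊆ JL := by
      intro hd x hx
      rcases hcover x with h | h
      · exact h
      · exact absurd h (Finset.disjoint_left.mp hd hx)
    rcases τ.laminar B hB JL hL with h | h | h
    · exact Or.inl h
    · -- JL ⊆ B
      rcases τ.laminar B hB JR hR with h' | h' | h' 
      · exfalso
        obtain ⟨x, hx⟩ := hJLne
        exact (Finset.disjoint_left.mp hdisj hx) (h' (h hx))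
      · -- JR ⊆ B, so B = univ
        exfalso
        apply hBne
        apply Finset.eq_univ_of_forall
        intro x
        rcases hcover x with hx | hx
        · exact h hx
        · exact h' hx
      · exact Or.inl (hBsubL_of_disjR h')
    · exact Or.inr (hBsubR_of_disjL h)
  -- if univ ∈ P then P = {univ}
  have huniv_case : ∀ P : Finset (Finset J), IsPartitionOf P Finset.univ →
      Finset.univ ∈ P → P = {Finset.univ} := by
    intro P hP hu
    apply Finset.eq_singleton_iff_unique_mem.mpr
    refine ⟨hu, fun B hB => ?_⟩
    by_contra hne
    have hd := hP.2.1 B hB Finset.univ hu hne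
    obtain ⟨x, hx⟩ := hP.1 B hB
    exact (Finset.disjoint_left.mp hd hx) (Finset.mem_univ x)
  -- splitting a compatible partition with univ ∉ P
  set SL := fun P : Finset (Finset J) => P.filter (· ⊆ JL) with hSL
  set SR := fun P : Finset (Finset J) => P.filter (· ⊆ JR) with hSR
  have hsplit : ∀ P : Finset (Finset J), IsPartitionOf P Finset.univ →
      (∀ B ∈ P, B ∈ τ.clusters) → Finset.univ ∉ P →
      (IsPartitionOf (SL P) JL ∧ ∀ B ∈ SL P, B ∈ τ.clusters.filter (· ⊆ JL)) ∧
      (IsPartitionOf (SR P) JR ∧ ∀ B ∈ SR P, B ∈ τ.clusters.filter (· ⊆ JR)) ∧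
      SL P ∪ SR P = P := by
    intro P hP hc hnu
    have hballs : ∀ B ∈ P, B ⊆ JL ∨ B ⊆ JR := by
      intro B hB
      exact hside B (hc B hB) (fun h => hnu (h ▸ hB))
    have hmemL : ∀ x ∈ JL, ∃ B ∈ SL P, x ∈ B := by
      intro x hx
      have : x ∈ P.sup id := hP.2.2 ▸ Finset.mem_univ x
      obtain ⟨B, hB, hxB⟩ := Finset.mem_sup.mp this
      refine ⟨B, ?_, hxB⟩
      rcases hballs B hB with h | h
      · exact Finset.mem_filter.mpr ⟨hB, h⟩
      · exact absurd (h hxB) (Finset.disjoint_left.mp hdisj hx)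
    have hmemR : ∀ x ∈ JR, ∃ B ∈ SR P, x ∈ B := by
      intro x hx
      have : x ∈ P.sup id := hP.2.2 ▸ Finset.mem_univ x
      obtain ⟨B, hB, hxB⟩ := Finset.mem_sup.mp this
      refine ⟨B, ?_, hxB⟩
      rcases hballs B hB with h | h
      · exact absurd (h hxB) (Finset.disjoint_right.mp hdisj hx)
      · exact Finset.mem_filter.mpr ⟨hB, h⟩
    refine ⟨⟨⟨?_, ?_, ?_⟩, ?_⟩, ⟨⟨?_, ?_, ?_⟩, ?_⟩, ?_⟩
    · exact fun B hB => hP.1 B (Finset.mem_filter.mp hB).1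
    · exact fun B hB B' hB' h =>
        hP.2.1 B (Finset.mem_filter.mp hB).1 B' (Finset.mem_filter.mp hB').1 h
    · apply le_antisymm
      · exact Finset.sup_le fun B hB => (Finset.mem_filter.mp hB).2
      · intro x hx
        obtain ⟨B, hB, hxB⟩ := hmemL x hx
        exact Finset.mem_sup.mpr ⟨B, hB, hxB⟩
    · intro B hB
      have h := Finset.mem_filter.mp hB
      exact Finset.mem_filter.mpr ⟨hc B h.1, h.2⟩
    · exact fun B hB => hP.1 B (Finset.mem_filter.mp hB).1
    · exact fun B hB B' hB' h =>
        hP.2.1 B (Finset.mem_filter.mp hB).1 B' (Finset.mem_filter.mp hB').1 h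
    · apply le_antisymm
      · exact Finset.sup_le fun B hB => (Finset.mem_filter.mp hB).2
      · intro x hx
        obtain ⟨B, hB, hxB⟩ := hmemR x hx
        exact Finset.mem_sup.mpr ⟨B, hB, hxB⟩
    · intro B hB
      have h := Finset.mem_filter.mp hB
      exact Finset.mem_filter.mpr ⟨hc B h.1, h.2⟩
    · apply Finset.Subset.antisymm
      · intro B hB
        rcases Finset.mem_union.mp hB with h | h
        · exact (Finset.mem_filter.mp h).1
        · exact (Finset.mem_filter.mp h).1
      · intro B hB
        rcases hballs B hB with h | h
        · exact Finset.mem_union_left _ (Finset.mem_filter.mpr ⟨hB, h⟩)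
        · exact Finset.mem_union_right _ (Finset.mem_filter.mpr ⟨hB, h⟩)
  -- merging two compatible partitions of JL and JR
  have hmerge : ∀ PL PR : Finset (Finset J),
      IsPartitionOf PL JL → (∀ B ∈ PL, B ∈ τ.clusters.filter (· ⊆ JL)) →
      IsPartitionOf PR JR → (∀ B ∈ PR, B ∈ τ.clusters.filter (· ⊆ JR)) →
      (IsPartitionOf (PL ∪ PR) Finset.univ ∧ (∀ B ∈ PL ∪ PR, B ∈ τ.clusters)) ∧
      Finset.univ ∉ PL ∪ PR ∧ SL (PL ∪ PR) = PL ∧ SR (PL ∪ PR) = PR := by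
    intro PL PR hPL hcL hPR hcR
    have hsubL : ∀ B ∈ PL, B ⊆ JL := fun B hB => (Finset.mem_filter.mp (hcL B hB)).2
    have hsubR : ∀ B ∈ PR, B ⊆ JR := fun B hB => (Finset.mem_filter.mp (hcR B hB)).2
    have hnotR : ∀ B ∈ PL, ¬ B ⊆ JR := by
      intro B hB h
      obtain ⟨x, hx⟩ := hPL.1 B hB
      exact (Finset.disjoint_left.mp hdisj (hsubL B hB hx)) (h hx)
    have hnotL : ∀ B ∈ PR, ¬ B ⊆ JL := by
      intro B hB h
      obtain ⟨x, hx⟩ := hPR.1 B hB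
      exact (Finset.disjoint_left.mp hdisj (h hx)) (hsubR B hB hx)
    refine ⟨⟨⟨?_, ?_, ?_⟩, ?_⟩, ?_, ?_, ?_⟩
    · intro B hB
      rcases Finset.mem_union.mp hB with h | h
      · exact hPL.1 B h
      · exact hPR.1 B h
    · intro B hB B' hB' hne
      rcases Finset.mem_union.mp hB with h | h <;>
        rcases Finset.mem_union.mp hB' with h' | h'
      · exact hPL.2.1 B h B' h' hne
      · exact hdisj.mono (hsubL B h) (hsubR B' h')
      · exact (hdisj.mono (hsubL B' h') (hsubR B h)).symm
      · exact hPR.2.1 B h B' h' hne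
    · rw [Finset.sup_union, hPL.2.2, hPR.2.2, ← hunion]
      rfl
    · intro B hB
      rcases Finset.mem_union.mp hB with h | h
      · exact (Finset.mem_filter.mp (hcL B h)).1
      · exact (Finset.mem_filter.mp (hcR B h)).1
    · intro h
      rcases Finset.mem_union.mp h with h | h
      · exact hLneu (le_antisymm (Finset.subset_univ JL) (hsubL _ h))
      · exact hRneu (le_antisymm (Finset.subset_univ JR) (hsubR _ h))
    · apply Finset.Subset.antisymm
      · intro B hB
        have h := Finset.mem_filter.mp hB
        rcases Finset.mem_union.mp h.1 with h' | h'
        · exact h'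
        · exact absurd h.2 (hnotL B h')
      · intro B hB
        exact Finset.mem_filter.mpr ⟨Finset.mem_union_left _ hB, hsubL B hB⟩
    · apply Finset.Subset.antisymm
      · intro B hB
        have h := Finset.mem_filter.mp hB
        rcases Finset.mem_union.mp h.1 with h' | h'
        · exact absurd h.2 (hnotR B h')
        · exact h'
      · intro B hB
        exact Finset.mem_filter.mpr ⟨Finset.mem_union_right _ hB, hsubR B hB⟩
  -- the equivalence
  let e : {P : Finset (Finset J) //
        IsPartitionOf P (Finset.univ : Finset J) ∧ ∀ B ∈ P, B ∈ τ.clusters} ≃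
      Option ({P : Finset (Finset J) //
            IsPartitionOf P JL ∧ ∀ B ∈ P, B ∈ τ.clusters.filter (· ⊆ JL)} ×
          {P : Finset (Finset J) //
            IsPartitionOf P JR ∧ ∀ B ∈ P, B ∈ τ.clusters.filter (· ⊆ JR)}) :=
    { toFun := fun P =>
        if h : Finset.univ ∈ P.1 then none
        else
          some (⟨SL P.1, ⟨(hsplit P.1 P.2.1 P.2.2 h).1.1, (hsplit P.1 P.2.1 P.2.2 h).1.2⟩⟩,
                ⟨SR P.1, ⟨(hsplit P.1 P.2.1 P.2.2 h).2.1.1, (hsplit P.1 P.2.1 P.2.2 h).2.1.2⟩⟩)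
      invFun := fun o =>
        match o with
        | none => ⟨{Finset.univ}, by
            refine ⟨⟨?_, ?_, ?_⟩, ?_⟩
            · intro B hB
              rw [Finset.mem_singleton.mp hB]
              exact Finset.univ_nonempty_iff.mpr (Fintype.card_pos_iff.mp (by omega))
            · intro B hB B' hB' hne
              exact absurd (Finset.mem_singleton.mp hB ▸ Finset.mem_singleton.mp hB' ▸ rfl)
                hne
            · simp
            · intro B hB
              rw [Finset.mem_singleton.mp hB]
              exact τ.root_mem⟩
        | some pq => ⟨pq.1.1 ∪ pq.2.1,
            (hmerge pq.1.1 pq.2.1 pq.1.2.1 pq.1.2.2 pq.2.2.1 pq.2.2.2).1⟩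
      left_inv := by
        rintro ⟨P, hP, hc⟩
        by_cases h : Finset.univ ∈ P
        · simp only [dif_pos h]
          exact Subtype.ext (huniv_case P hP h).symm
        · simp only [dif_neg h]
          exact Subtype.ext (hsplit P hP hc h).2.2
      right_inv := by
        rintro (_ | ⟨⟨PL, hPL⟩, ⟨PR, hPR⟩⟩)
        · simp only []
          rw [dif_pos (Finset.mem_singleton_self _)]
        · have h := hmerge PL PR hPL.1 hPL.2 hPR.1 hPR.2
          simp only []
          rw [dif_neg h.2.1]
          congr 1
          exact Prod.ext (Subtype.ext h.2.2.1) (Subtype.ext h.2.2.2) }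
  rw [Nat.card_congr e, Finite.card_option, Nat.card_prod, add_comm]
end

section
/- Let τ be a caterpillar binary hierarchy over a finite index set J, i.e., a binary hierarchy in which every nonsingleton cluster of C(τ) has at least one singleton child. Then the number of partitions of J compatible with τ equals |J|. -/
open Finset

variable {J : Type*} [DecidableEq J] [Fintype J]

/-!
If the cluster `K` has a singleton child `{j}`, a compatible partition of `K` either is `{K}`
or has `{j}` as a block: by laminarity the block containing `j` is `K`, or is disjoint from the
sibling `K \ {j}` and hence equals `{j}`. Removing that block leaves a compatible partition of
`K \ {j}`, so the count grows by one with each element along the caterpillar's spine.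
-/

namespace IsPartitionOf

omit [Fintype J]

variable {P : Finset (Finset J)} {K : Finset J}

theorem subset_of_mem (hP : IsPartitionOf P K) {B : Finset J} (hB : B ∈ P) : B ⊆ K :=
  hP.2.2 ▸ le_sup (f := id) hB

theorem exists_mem (hP : IsPartitionOf P K) {x : J} (hx : x ∈ K) : ∃ B ∈ P, x ∈ B :=
  mem_sup.mp (hP.2.2.symm ▸ hx)

theorem singleton (hK : K.Nonempty) : IsPartitionOf {K} K :=
  ⟨by simpa using hK, by simp +contextual, sup_singleton⟩

theorem eq_singleton_of_mem (hP : IsPartitionOf P K) (hKP : K ∈ P) : P = {K} := by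
  refine eq_singleton_iff_unique_mem.mpr ⟨hKP, fun B hB => ?_⟩
  by_contra hne
  obtain ⟨x, hx⟩ := hP.1 B hB
  exact disjoint_left.mp (hP.2.1 B hB K hKP hne) hx (hP.subset_of_mem hB hx)

theorem eq_singleton_of_card_eq_one (hP : IsPartitionOf P K) (hK : K.card = 1) : P = {K} := by
  obtain ⟨j, rfl⟩ := card_eq_one.mp hK
  obtain ⟨B, hB, hjB⟩ := hP.exists_mem (mem_singleton_self j)
  have hBj : B = {j} := (subset_singleton_iff.mp (hP.subset_of_mem hB)).resolve_left
    (ne_empty_of_mem hjB)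
  exact hP.eq_singleton_of_mem (hBj ▸ hB)

theorem erase_singleton (hP : IsPartitionOf P K) {j : J} (hjP : {j} ∈ P) :
    IsPartitionOf (P.erase {j}) (K.erase j) := by
  refine ⟨fun B hB => hP.1 B (mem_of_mem_erase hB),
    fun B hB B' hB' => hP.2.1 B (mem_of_mem_erase hB) B' (mem_of_mem_erase hB'), ?_⟩
  ext x
  simp only [mem_sup, mem_erase, id]
  constructor
  · rintro ⟨B, ⟨hBj, hB⟩, hxB⟩
    refine ⟨fun hxj => ?_, hP.subset_of_mem hB hxB⟩
    subst hxj
    exact disjoint_left.mp (hP.2.1 B hB {x} hjP hBj) hxB (mem_singleton_self x)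
  · rintro ⟨hxj, hxK⟩
    obtain ⟨B, hB, hxB⟩ := hP.exists_mem hxK
    exact ⟨B, ⟨by rintro rfl; exact hxj (mem_singleton.mp hxB), hB⟩, hxB⟩

theorem insert_singleton {j : J} (hP : IsPartitionOf P (K.erase j)) (hj : j ∈ K) :
    IsPartitionOf (insert {j} P) K := by
  have hjP : ∀ B ∈ P, Disjoint {j} B := fun B hB =>
    disjoint_singleton_left.mpr fun hjB => notMem_erase j K (hP.subset_of_mem hB hjB)
  refine ⟨?_, ?_, ?_⟩
  · simpa [singleton_nonempty] using hP.1
  · simp only [mem_insert]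
    rintro B (rfl | hB) B' (rfl | hB') hne
    exacts [absurd rfl hne, hjP B' hB', (hjP B hB).symm, hP.2.1 B hB B' hB' hne]
  · rw [sup_insert, hP.2.2, id, sup_eq_union, ← insert_eq, insert_erase hj]

theorem singleton_mem_of_laminar (hP : IsPartitionOf P K) {j : J} (hj : j ∈ K) (hKP : K ∉ P)
    (hlam : ∀ B ∈ P, B ⊆ K.erase j ∨ K.erase j ⊆ B ∨ Disjoint B (K.erase j)) : {j} ∈ P := by
  obtain ⟨B, hB, hjB⟩ := hP.exists_mem hj
  have hBK := hP.subset_of_mem hB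
  suffices B = {j} from this ▸ hB
  rcases hlam B hB with hsub | hsup | hdisj
  · exact absurd (hsub hjB) (notMem_erase j K)
  · refine absurd ?_ hKP
    have : K ⊆ B := insert_erase hj ▸ insert_subset hjB hsup
    exact (Subset.antisymm hBK this) ▸ hB
  · refine eq_singleton_iff_unique_mem.mpr ⟨hjB, fun x hxB => ?_⟩
    by_contra hxj
    exact disjoint_left.mp hdisj hxB (mem_erase.mpr ⟨hxj, hBK hxB⟩)

end IsPartitionOf

namespace BinaryHierarchy

variable (τ : BinaryHierarchy J)

abbrev CompatiblePartition (K : Finset J) : Type _ :=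
  {P : Finset (Finset J) // IsPartitionOf P K ∧ ∀ B ∈ P, B ∈ τ.clusters}

variable {τ}

theorem card_compatiblePartition_of_card_eq_one {K : Finset J} (hK : K ∈ τ.clusters)
    (hcard : K.card = 1) : Nat.card (τ.CompatiblePartition K) = 1 := by
  have : Unique (τ.CompatiblePartition K) :=
    { default := ⟨{K}, .singleton (τ.nonempty_of_mem K hK), by simpa using hK⟩
      uniq := fun P => Subtype.ext (P.2.1.eq_singleton_of_card_eq_one hcard) }
  exact Nat.card_unique

/-- Peeling off the singleton child `{j}` of `K`: `none` stands for the partition `{K}`. -/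
def compatiblePartitionEquivOption {K : Finset J} {j : J} (hK : K ∈ τ.clusters) (hj : j ∈ K)
    (hKj : K ≠ {j}) (hrest : K.erase j ∈ τ.clusters) :
    τ.CompatiblePartition K ≃ Option (τ.CompatiblePartition (K.erase j)) where
  toFun P := if hKP : K ∈ P.1 then none else
    have hjP := P.2.1.singleton_mem_of_laminar hj hKP fun B hB =>
      τ.laminar B (P.2.2 B hB) _ hrest
    some ⟨P.1.erase {j}, P.2.1.erase_singleton hjP, fun B hB => P.2.2 B (mem_of_mem_erase hB)⟩
  invFun o := o.elim ⟨{K}, .singleton (τ.nonempty_of_mem K hK), by simpa using hK⟩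
    fun P => ⟨insert {j} P.1, P.2.1.insert_singleton hj, by
      simpa [τ.singleton_mem j] using P.2.2⟩
  left_inv := by
    rintro ⟨P, hP, hPc⟩
    by_cases hKP : K ∈ P
    · simpa [hKP] using (hP.eq_singleton_of_mem hKP).symm
    · simp only [hKP, dite_false, Option.elim_some, Subtype.mk.injEq]
      exact insert_erase (hP.singleton_mem_of_laminar hj hKP fun B hB =>
        τ.laminar B (hPc B hB) _ hrest)
  right_inv := by
    rintro (_ | ⟨P, hP, hPc⟩)
    · simp
    · have hjP : {j} ∉ P := fun h => notMem_erase j K (hP.subset_of_mem h (mem_singleton_self j))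
      have hKP : K ∉ insert {j} P := by
        rw [mem_insert, not_or]
        exact ⟨hKj, fun h => notMem_erase j K (hP.subset_of_mem h hj)⟩
      simp [hKP, erase_insert hjP]

theorem card_compatiblePartition_of_mem
    (hcat : ∀ I ∈ τ.clusters, 1 < I.card → ∃ j ∈ I, I.erase j ∈ τ.clusters)
    {K : Finset J} (hK : K ∈ τ.clusters) : Nat.card (τ.CompatiblePartition K) = K.card := by
  induction K using strongInduction with
  | H K ih =>
  have hpos := (τ.nonempty_of_mem K hK).card_pos
  obtain hone | hgt : K.card = 1 ∨ 1 < K.card := by omega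
  · rw [hone, card_compatiblePartition_of_card_eq_one hK hone]
  obtain ⟨j, hj, hrest⟩ := hcat K hK hgt
  have hKj : K ≠ {j} := by rintro rfl; simp at hgt
  rw [Nat.card_congr (compatiblePartitionEquivOption hK hj hKj hrest), Finite.card_option,
    ih _ (erase_ssubset hj) hrest, card_erase_of_mem hj]
  omega

end BinaryHierarchy

/-- for a caterpillar hierarchy (every nonsingleton cluster has a
singleton child) the number of compatible partitions of `J` equals `|J|`. -/
theorem caterpillar_partition_count (τ : BinaryHierarchy J)
    (hcat : ∀ I ∈ τ.clusters, 1 < I.card →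
      ∃ j ∈ I, ({j} : Finset J) ∈ τ.clusters ∧ I.erase j ∈ τ.clusters) :
    Nat.card {P : Finset (Finset J) //
        IsPartitionOf P (Finset.univ : Finset J) ∧ ∀ B ∈ P, B ∈ τ.clusters} =
      Fintype.card J := by
  refine τ.card_compatiblePartition_of_mem (fun I hI hI₁ => ?_) τ.root_mem
  obtain ⟨j, hj, -, hrest⟩ := hcat I hI hI₁
  exact ⟨j, hj, hrest⟩
end

section
/- Let V be a real inner product space and let a, b ∈ V with b ≠ 0. For t ≥ 0 define x(t) := e^{−t} a + (1 − e^{−t}) b. If x(t) ≠ 0 for all t in an interval [t₀, t₁] ⊆ [0, ∞), then the function t ↦ ⟨x(t), b⟩ / (‖x(t)‖ · ‖b‖) is monotone nondecreasing on [t₀, t₁]; its derivative equals (‖b‖² ‖x(t)‖² − ⟨x(t), b⟩²) / (‖x(t)‖³ ‖b‖), which is nonnegative by the Cauchy–Schwarz inequality. -/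
open scoped RealInnerProductSpace

/-- The solution `x(t) = e⁻ᵗ a + (1 - e⁻ᵗ) b` of the attracting dynamics
`ẋ = -(x - b)` with `x(0) = a`. -/
noncomputable def interp {V : Type*} [AddCommGroup V] [Module ℝ V]
    (a b : V) (t : ℝ) : V :=
  Real.exp (-t) • a + (1 - Real.exp (-t)) • b

/-! Differentiating `c = ⟪x, b⟫ / (‖x‖‖b‖)` along any curve gives
`c' = (⟪x', b⟫‖x‖² - ⟪x, b⟫⟪x, x'⟫) / (‖x‖³‖b‖)`. Along the attracting flow `x' = b - x`
the terms in `⟪x, b⟫‖x‖²` cancel, leaving `(‖b‖²‖x‖² - ⟪x, b⟫²) / (‖x‖³‖b‖)`, which is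
nonnegative by Cauchy–Schwarz; monotonicity follows from the mean value theorem. -/

theorem hasDerivAt_interp {V : Type*} [NormedAddCommGroup V] [NormedSpace ℝ V]
    (a b : V) (t : ℝ) : HasDerivAt (interp a b) (b - interp a b t) t := by
  have hexp : HasDerivAt (fun s : ℝ => Real.exp (-s)) (-Real.exp (-t)) t := by
    simpa using (hasDerivAt_neg t).exp
  refine ((hexp.smul_const a).add
    (((hasDerivAt_const t (1 : ℝ)).sub hexp).smul_const b)).congr_deriv ?_
  simp only [interp, zero_sub, neg_neg, neg_smul, sub_smul, one_smul]
  abel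

section InnerProductSpace

variable {V : Type*} [NormedAddCommGroup V] [InnerProductSpace ℝ V]

theorem HasDerivAt.norm_of_ne_zero {x : ℝ → V} {x' : V} {t : ℝ} (hx : HasDerivAt x x' t)
    (h0 : x t ≠ 0) : HasDerivAt (fun s => ‖x s‖) (⟪x t, x'⟫ / ‖x t‖) t := by
  have hnorm : ‖x t‖ ≠ 0 := norm_ne_zero_iff.mpr h0
  have hsqrt := hx.norm_sq.sqrt (pow_ne_zero 2 hnorm)
  simp only [Real.sqrt_sq (norm_nonneg _)] at hsqrt
  refine hsqrt.congr_deriv ?_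
  field_simp

theorem HasDerivAt.inner_div_norm_mul_norm {x : ℝ → V} {x' b : V} {t : ℝ}
    (hx : HasDerivAt x x' t) (h0 : x t ≠ 0) (hb : b ≠ 0) :
    HasDerivAt (fun s => ⟪x s, b⟫ / (‖x s‖ * ‖b‖))
      ((⟪x', b⟫ * ‖x t‖ ^ 2 - ⟪x t, b⟫ * ⟪x t, x'⟫) / (‖x t‖ ^ 3 * ‖b‖)) t := by
  have hxt : ‖x t‖ ≠ 0 := norm_ne_zero_iff.mpr h0
  have hbn : ‖b‖ ≠ 0 := norm_ne_zero_iff.mpr hb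
  have hinner : HasDerivAt (fun s => ⟪x s, b⟫) ⟪x', b⟫ t := by
    simpa using hx.inner ℝ (hasDerivAt_const t b)
  refine (hinner.div ((hx.norm_of_ne_zero h0).mul_const ‖b‖)
    (mul_ne_zero hxt hbn)).congr_deriv ?_
  field_simp

theorem sq_inner_le_sq_norm_mul_sq_norm (x y : V) : ⟪x, y⟫ ^ 2 ≤ ‖x‖ ^ 2 * ‖y‖ ^ 2 := by
  simpa only [sq, real_inner_self_eq_norm_mul_norm] using real_inner_mul_inner_self_le x y

theorem sq_norm_mul_sq_norm_sub_sq_inner_div_nonneg (x b : V) :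
    0 ≤ (‖b‖ ^ 2 * ‖x‖ ^ 2 - ⟪x, b⟫ ^ 2) / (‖x‖ ^ 3 * ‖b‖) := by
  have := sq_inner_le_sq_norm_mul_sq_norm x b
  exact div_nonneg (by linarith) (by positivity)

theorem hasDerivAt_inner_interp_div_norm_mul_norm {a b : V} {t : ℝ} (hb : b ≠ 0)
    (h0 : interp a b t ≠ 0) :
    HasDerivAt (fun s => ⟪interp a b s, b⟫ / (‖interp a b s‖ * ‖b‖))
      ((‖b‖ ^ 2 * ‖interp a b t‖ ^ 2 - ⟪interp a b t, b⟫ ^ 2) /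
        (‖interp a b t‖ ^ 3 * ‖b‖)) t := by
  convert (hasDerivAt_interp a b t).inner_div_norm_mul_norm h0 hb using 2
  rw [inner_sub_left, inner_sub_right, real_inner_self_eq_norm_sq, real_inner_self_eq_norm_sq,
    real_inner_comm b]
  ring

end InnerProductSpace

theorem cosine_alignment_monotone_general {V : Type*} [NormedAddCommGroup V]
    [InnerProductSpace ℝ V]
    (a b : V) (hb : b ≠ 0) (t₀ t₁ : ℝ)
    (hx : ∀ t ∈ Set.Icc t₀ t₁, interp a b t ≠ 0) :
    MonotoneOn (fun t => ⟪interp a b t, b⟫ / (‖interp a b t‖ * ‖b‖))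
      (Set.Icc t₀ t₁) ∧
    ∀ t ∈ Set.Icc t₀ t₁,
      HasDerivAt (fun s => ⟪interp a b s, b⟫ / (‖interp a b s‖ * ‖b‖))
        ((‖b‖ ^ 2 * ‖interp a b t‖ ^ 2 - ⟪interp a b t, b⟫ ^ 2) /
          (‖interp a b t‖ ^ 3 * ‖b‖)) t ∧
      0 ≤ (‖b‖ ^ 2 * ‖interp a b t‖ ^ 2 - ⟪interp a b t, b⟫ ^ 2) /
          (‖interp a b t‖ ^ 3 * ‖b‖) := by
  have hderiv := fun t (ht : t ∈ Set.Icc t₀ t₁) =>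
    hasDerivAt_inner_interp_div_norm_mul_norm hb (hx t ht)
  refine ⟨?_, fun t ht => ⟨hderiv t ht, sq_norm_mul_sq_norm_sub_sq_inner_div_nonneg _ _⟩⟩
  exact monotoneOn_of_hasDerivWithinAt_nonneg (convex_Icc t₀ t₁)
    (fun t ht => (hderiv t ht).continuousAt.continuousWithinAt)
    (fun t ht => (hderiv t (interior_subset ht)).hasDerivWithinAt)
    (fun t _ => sq_norm_mul_sq_norm_sub_sq_inner_div_nonneg _ _)

/-- along `x(t) = e⁻ᵗ a + (1 - e⁻ᵗ) b` (with `b ≠ 0` and `x`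
nonvanishing on `[t₀, t₁] ⊆ [0, ∞)`), the cosine `⟪x(t), b⟫ / (‖x(t)‖‖b‖)` is
monotone nondecreasing, with derivative
`(‖b‖²‖x(t)‖² - ⟪x(t), b⟫²) / (‖x(t)‖³‖b‖) ≥ 0`. -/
theorem cosine_alignment_monotone {V : Type*} [NormedAddCommGroup V]
    [InnerProductSpace ℝ V]
    (a b : V) (hb : b ≠ 0) (t₀ t₁ : ℝ) (ht₀ : 0 ≤ t₀) (ht : t₀ ≤ t₁)
    (hx : ∀ t ∈ Set.Icc t₀ t₁, interp a b t ≠ 0) :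
    MonotoneOn (fun t => ⟪interp a b t, b⟫ / (‖interp a b t‖ * ‖b‖))
      (Set.Icc t₀ t₁) ∧
    ∀ t ∈ Set.Icc t₀ t₁,
      HasDerivAt (fun s => ⟪interp a b s, b⟫ / (‖interp a b s‖ * ‖b‖))
        ((‖b‖ ^ 2 * ‖interp a b t‖ ^ 2 - ⟪interp a b t, b⟫ ^ 2) /
          (‖interp a b t‖ ^ 3 * ‖b‖)) t ∧
      0 ≤ (‖b‖ ^ 2 * ‖interp a b t‖ ^ 2 - ⟪interp a b t, b⟫ ^ 2) /
          (‖interp a b t‖ ^ 3 * ‖b‖) :=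
  cosine_alignment_monotone_general a b hb t₀ t₁ hx
end

section
/- Let a, b, c ∈ ℂ and let ζ := exp(iπ/3). On each ordered side erect the equilateral triangle with third vertex obtained by rotating one endpoint about the other by 60°, and let n_a := (b + c + (c + ζ(b − c)))/3, n_b := (c + a + (a + ζ(c − a)))/3, and n_c := (a + b + (b + ζ(a − b)))/3 be the centroids of the three erected equilateral triangles. Then the triangle with vertices n_a, n_b, n_c is equilateral, i.e., |n_a − n_b| = |n_b − n_c| = |n_c − n_a|, and its centroid coincides with the centroid of the original triangle: (n_a + n_b + n_c)/3 = (a + b + c)/3. -/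
/-!
`ζ = exp (iπ/3)` is a primitive sixth root of unity, so `ζ² = ζ - 1` and `‖ζ‖ = 1`. Using
`ζ² = ζ - 1`, each side of the Napoleon triangle is `-ζ` times the next one, that is, the next side
rotated by `120°`, so all sides have the same length. In the sum of the three centres the
`ζ`-terms cancel, which gives the centroid.
-/

open Complex Polynomial

/-- For `ω = exp (iπ/3)`, the centre of the equilateral triangle erected on the segment from `p`
to `q`. -/
noncomputable def napoleonCenter {K : Type*} [Field K] (ω p q : K) : K :=
  (p + q + (q + ω * (p - q))) / 3

theorem IsPrimitiveRoot.sq_eq_sub_one {R : Type*} [CommRing R] [IsDomain R] {ω : R}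
    (hω : IsPrimitiveRoot ω 6) : ω ^ 2 = ω - 1 := by
  have hroot := hω.isRoot_cyclotomic (by norm_num)
  rw [cyclotomic_six, IsRoot, eval_add, eval_sub, eval_pow, eval_X, eval_one] at hroot
  linear_combination hroot

theorem isPrimitiveRoot_exp_I_mul_pi_div_three :
    IsPrimitiveRoot (exp (I * (Real.pi / 3))) 6 := by
  convert isPrimitiveRoot_exp 6 (by norm_num) using 2
  push_cast
  ring

theorem napoleonCenter_sub_napoleonCenter {K : Type*} [Field K] {ω : K} (hω : ω ^ 2 = ω - 1)
    (p q r : K) :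
    napoleonCenter ω p q - napoleonCenter ω q r =
      -ω * (napoleonCenter ω q r - napoleonCenter ω r p) := by
  unfold napoleonCenter
  linear_combination ((p + q - 2 * r) / 3) * hω

theorem napoleonCenter_add_add {K : Type*} [Field K] [CharZero K] (ω p q r : K) :
    napoleonCenter ω p q + napoleonCenter ω q r + napoleonCenter ω r p = p + q + r := by
  unfold napoleonCenter
  ring

theorem norm_napoleonCenter_sub_napoleonCenter {K : Type*} [NormedField K] {ω : K}
    (hω : ω ^ 2 = ω - 1) (hω₁ : ‖ω‖ = 1) (p q r : K) :
    ‖napoleonCenter ω p q - napoleonCenter ω q r‖ =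
      ‖napoleonCenter ω q r - napoleonCenter ω r p‖ := by
  rw [napoleonCenter_sub_napoleonCenter hω, norm_mul, norm_neg, hω₁, one_mul]

/-- the outer Napoleon triangle of any triangle in the complex plane is
equilateral, and its centroid coincides with the centroid of the original triangle. -/
theorem napoleon_triangle (a b c : ℂ) :
    (‖((b + c + (c + Complex.exp (Complex.I * (Real.pi / 3)) * (b - c))) / 3 -
        (c + a + (a + Complex.exp (Complex.I * (Real.pi / 3)) * (c - a))) / 3)‖ =
      ‖((c + a + (a + Complex.exp (Complex.I * (Real.pi / 3)) * (c - a))) / 3 -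
        (a + b + (b + Complex.exp (Complex.I * (Real.pi / 3)) * (a - b))) / 3)‖ ∧
    ‖((c + a + (a + Complex.exp (Complex.I * (Real.pi / 3)) * (c - a))) / 3 -
        (a + b + (b + Complex.exp (Complex.I * (Real.pi / 3)) * (a - b))) / 3)‖ =
      ‖((a + b + (b + Complex.exp (Complex.I * (Real.pi / 3)) * (a - b))) / 3 -
        (b + c + (c + Complex.exp (Complex.I * (Real.pi / 3)) * (b - c))) / 3)‖) ∧
    ((b + c + (c + Complex.exp (Complex.I * (Real.pi / 3)) * (b - c))) / 3 +
        (c + a + (a + Complex.exp (Complex.I * (Real.pi / 3)) * (c - a))) / 3 +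
        (a + b + (b + Complex.exp (Complex.I * (Real.pi / 3)) * (a - b))) / 3) / 3 =
      (a + b + c) / 3 := by
  have hζ := isPrimitiveRoot_exp_I_mul_pi_div_three
  have hsq := hζ.sq_eq_sub_one
  have hnorm := hζ.norm'_eq_one (by norm_num)
  refine ⟨⟨norm_napoleonCenter_sub_napoleonCenter hsq hnorm b c a,
    norm_napoleonCenter_sub_napoleonCenter hsq hnorm c a b⟩, ?_⟩
  change (napoleonCenter _ b c + napoleonCenter _ c a + napoleonCenter _ a b) / 3 = _
  rw [napoleonCenter_add_add]
  ring
end
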